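/- arXiv:1403.3907 — 3 statements merged into one kernel-verified Lean document; each statement's English description precedes it below -/
import Mathlib

section
/- Let n ≥ 1 be an integer, P ≥ 1 and C > 0 and ε > 0 real numbers, and set L = εC/(n(P+1)). Let S be a finite index set with |S| ≤ n and let d_k ∈ ℂ for k ∈ S satisfy Im(d_k) ≥ 0 for all k, and −Re(d_k) ≤ P·Im(d_k) whenever Re(d_k) < 0. If |∑_{k∈S} d_k| ≤ C, then the rounded demands satisfy (∑_{k∈S} Re(ĥd_k))² + (∑_{k∈S} Im(ĥd_k))² ≤ (1 + 2ε)²·C², i.e., |∑_{k∈S} ĥd_k| ≤ (1 + 2ε)·C. -/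
/-!
Rounding moves each coordinate of a demand by at most `L`, hence each demand by at most `2L`
in norm. Over at most `n` demands the total moves by at most `2nL = 2εC/(P+1) ≤ 2εC`, so the
triangle inequality inflates the capacity `C` by at most the factor `1 + 2ε`.
-/

/-- The rounded demand: real part rounded up (resp. down) to a multiple of `L`
when it is nonnegative (resp. negative), imaginary part always rounded up. -/
noncomputable def roundDemand (L : ℝ) (d : ℂ) : ℂ :=
  if 0 ≤ d.re then
    ⟨(⌈d.re / L⌉ : ℤ) * L, (⌈d.im / L⌉ : ℤ) * L⟩
  else
    ⟨(⌊d.re / L⌋ : ℤ) * L, (⌈d.im / L⌉ : ℤ) * L⟩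

open Finset

lemma abs_ceil_div_mul_sub_le {L : ℝ} (hL : 0 < L) (x : ℝ) : |⌈x / L⌉ * L - x| ≤ L := by
  have hfactor : (⌈x / L⌉ : ℝ) * L - x = (⌈x / L⌉ - x / L) * L := by field_simp
  rw [hfactor, abs_mul, abs_of_pos hL]
  refine mul_le_of_le_one_left hL.le (abs_le.mpr ⟨?_, ?_⟩) <;>
    linarith [Int.le_ceil (x / L), Int.ceil_lt_add_one (x / L)]

lemma abs_floor_div_mul_sub_le {L : ℝ} (hL : 0 < L) (x : ℝ) : |⌊x / L⌋ * L - x| ≤ L := by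
  have hfactor : (⌊x / L⌋ : ℝ) * L - x = (⌊x / L⌋ - x / L) * L := by field_simp
  rw [hfactor, abs_mul, abs_of_pos hL]
  refine mul_le_of_le_one_left hL.le (abs_le.mpr ⟨?_, ?_⟩) <;>
    linarith [Int.floor_le (x / L), Int.lt_floor_add_one (x / L)]

lemma abs_roundDemand_re_sub_le {L : ℝ} (hL : 0 < L) (z : ℂ) :
    |(roundDemand L z).re - z.re| ≤ L := by
  unfold roundDemand
  split_ifs
  · exact abs_ceil_div_mul_sub_le hL z.re
  · exact abs_floor_div_mul_sub_le hL z.re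

lemma abs_roundDemand_im_sub_le {L : ℝ} (hL : 0 < L) (z : ℂ) :
    |(roundDemand L z).im - z.im| ≤ L := by
  unfold roundDemand
  split_ifs <;> exact abs_ceil_div_mul_sub_le hL z.im

lemma norm_roundDemand_sub_le {L : ℝ} (hL : 0 < L) (z : ℂ) :
    ‖roundDemand L z - z‖ ≤ 2 * L :=
  calc ‖roundDemand L z - z‖
      ≤ |(roundDemand L z - z).re| + |(roundDemand L z - z).im| :=
        Complex.norm_le_abs_re_add_abs_im _
    _ ≤ L + L := by
        rw [Complex.sub_re, Complex.sub_im]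
        exact add_le_add (abs_roundDemand_re_sub_le hL z) (abs_roundDemand_im_sub_le hL z)
    _ = 2 * L := by ring

lemma norm_sum_roundDemand_le {ι : Type*} {L : ℝ} (hL : 0 < L) (S : Finset ι) (d : ι → ℂ) :
    ‖∑ k ∈ S, roundDemand L (d k)‖ ≤ ‖∑ k ∈ S, d k‖ + #S * (2 * L) :=
  calc ‖∑ k ∈ S, roundDemand L (d k)‖
      = ‖∑ k ∈ S, d k + ∑ k ∈ S, (roundDemand L (d k) - d k)‖ := by
        rw [sum_sub_distrib, add_sub_cancel]
    _ ≤ ‖∑ k ∈ S, d k‖ + ∑ k ∈ S, ‖roundDemand L (d k) - d k‖ :=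
        (norm_add_le _ _).trans (add_le_add_right (norm_sum_le _ _) _)
    _ ≤ ‖∑ k ∈ S, d k‖ + #S * (2 * L) := by
        grw [sum_le_card_nsmul S _ (2 * L) fun k _ ↦ norm_roundDemand_sub_le hL (d k),
          nsmul_eq_mul]

lemma Complex.sq_re_add_sq_im (z : ℂ) : z.re ^ 2 + z.im ^ 2 = ‖z‖ ^ 2 := by
  rw [Complex.sq_norm, Complex.normSq_apply]
  ring

theorem stmt_3_general {ι : Type*} (n : ℕ) (hn : 1 ≤ n) (P C ε L : ℝ)
    (hP : 1 ≤ P) (hC : 0 < C) (hε : 0 < ε)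
    (hL : L = ε * C / (n * (P + 1)))
    (S : Finset ι) (hS : S.card ≤ n) (d : ι → ℂ)
    (hCap : ‖∑ k ∈ S, d k‖ ≤ C) :
    (∑ k ∈ S, (roundDemand L (d k)).re) ^ 2 + (∑ k ∈ S, (roundDemand L (d k)).im) ^ 2
        ≤ (1 + 2 * ε) ^ 2 * C ^ 2 ∧
    ‖∑ k ∈ S, roundDemand L (d k)‖ ≤ (1 + 2 * ε) * C := by
  have hn' : (0 : ℝ) < n := by exact_mod_cast hn
  have hLpos : 0 < L := by rw [hL]; positivity
  have hError : (#S : ℝ) * (2 * L) ≤ 2 * ε * C :=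
    calc (#S : ℝ) * (2 * L) ≤ n * (2 * L) := by gcongr
      _ = 2 * ε * C / (P + 1) := by rw [hL]; field_simp
      _ ≤ 2 * ε * C := div_le_self (by positivity) (by linarith)
  have hNorm : ‖∑ k ∈ S, roundDemand L (d k)‖ ≤ (1 + 2 * ε) * C := by
    linarith [norm_sum_roundDemand_le hLpos S d]
  refine ⟨?_, hNorm⟩
  rw [← Complex.re_sum, ← Complex.im_sum, Complex.sq_re_add_sq_im, ← mul_pow]
  exact pow_le_pow_left₀ (norm_nonneg _) hNorm 2

/-- any feasible set of demands remains feasible after rounding,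
with the capacity inflated by a factor `1 + 2ε`. -/
theorem stmt_3 {ι : Type*} (n : ℕ) (hn : 1 ≤ n) (P C ε L : ℝ)
    (hP : 1 ≤ P) (hC : 0 < C) (hε : 0 < ε)
    (hL : L = ε * C / (n * (P + 1)))
    (S : Finset ι) (hS : S.card ≤ n) (d : ι → ℂ)
    (hIm : ∀ k ∈ S, 0 ≤ (d k).im)
    (hArg : ∀ k ∈ S, (d k).re < 0 → -(d k).re ≤ P * (d k).im)
    (hCap : ‖∑ k ∈ S, d k‖ ≤ C) :
    (∑ k ∈ S, (roundDemand L (d k)).re) ^ 2 + (∑ k ∈ S, (roundDemand L (d k)).im) ^ 2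
        ≤ (1 + 2 * ε) ^ 2 * C ^ 2 ∧
    ‖∑ k ∈ S, roundDemand L (d k)‖ ≤ (1 + 2 * ε) * C :=
  stmt_3_general n hn P C ε L hP hC hε hL S hS d hCap
end

section
/- Let t ≥ 0 be a real number and let a, b, c, â, b̂, ĉ be real numbers with 0 ≤ a ≤ â, 0 ≤ b ≤ b̂, 0 ≤ c ≤ ĉ, a ≥ â − t, b ≥ b̂ − t, and such that â ≥ t or b̂ ≥ t. Then (a − b)² + c² ≤ (â − b̂)² + ĉ² + 2t(â + b̂) − 2t². -/
/-- second case of the capacity-violation analysis (at least one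
rounded real projection exceeds `t`). -/
theorem stmt_5 (t a b c ah bh ch : ℝ) (ht : 0 ≤ t)
    (ha : 0 ≤ a) (hah : a ≤ ah) (hat : ah - t ≤ a)
    (hb : 0 ≤ b) (hbh : b ≤ bh) (hbt : bh - t ≤ b)
    (hc : 0 ≤ c) (hch : c ≤ ch)
    (hcase : t ≤ ah ∨ t ≤ bh) :
    (a - b) ^ 2 + c ^ 2 ≤ (ah - bh) ^ 2 + ch ^ 2 + 2 * t * (ah + bh) - 2 * t ^ 2 := by
  rcases hcase with h | h
  · nlinarith [sq_nonneg (a-b), sq_nonneg (ah-bh), mul_nonneg hc (sub_nonneg.2 hch),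
      sq_nonneg (a - b - (ah - bh)), mul_nonneg (sub_nonneg.2 hat) (sub_nonneg.2 hbh),
      mul_nonneg (sub_nonneg.2 hbt) (sub_nonneg.2 hah), mul_nonneg ht (sub_nonneg.2 h)]
  · nlinarith [sq_nonneg (a-b), sq_nonneg (ah-bh), mul_nonneg hc (sub_nonneg.2 hch),
      sq_nonneg (a - b - (ah - bh)), mul_nonneg (sub_nonneg.2 hat) (sub_nonneg.2 hbh),
      mul_nonneg (sub_nonneg.2 hbt) (sub_nonneg.2 hah), mul_nonneg ht (sub_nonneg.2 h)]
end

section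
/- Let n ≥ 1 be an integer, P ≥ 1 and C > 0 and ε > 0 real numbers, and set L = εC/(n(P+1)). Let S be a finite index set with |S| ≤ n and let d_k ∈ ℂ for k ∈ S satisfy Im(d_k) ≥ 0 for all k. Suppose the rounded demands satisfy |∑_{k∈S} ĥd_k| ≤ (1 + 2ε)·C and ∑_{k∈S, Re(d_k)<0} (−Re(ĥd_k)) ≤ (P+1)·C. Then the original demands satisfy |∑_{k∈S} d_k| ≤ (1 + 3ε)·C. -/
/-! Each rounded demand is within `2L` of the true one, so rounding `|S| ≤ n` demands moves
the total by at most `2nL = 2εC/(P+1) ≤ εC`, and the triangle inequality turns the bound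
`(1 + 2ε)C` on the rounded total into `(1 + 3ε)C` on the true one. -/

section FloorRing

variable {k : Type*} [Field k] [LinearOrder k] [IsStrictOrderedRing k] [FloorRing k]

theorem Int.abs_sub_floor_div_mul_le (a : k) {b : k} (hb : 0 < b) :
    |a - ⌊a / b⌋ * b| ≤ b :=
  abs_le.2 ⟨by linarith [Int.sub_floor_div_mul_nonneg a hb], (Int.sub_floor_div_mul_lt a hb).le⟩

theorem Int.abs_sub_ceil_div_mul_le (a : k) {b : k} (hb : 0 < b) :
    |a - ⌈a / b⌉ * b| ≤ b := by
  have h := Int.abs_sub_floor_div_mul_le (-a) hb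
  rwa [neg_div, Int.floor_neg, Int.cast_neg, neg_mul, sub_neg_eq_add, ← abs_neg,
    neg_add, neg_neg, ← sub_eq_add_neg] at h

end FloorRing

theorem norm_sub_roundDemand_le {L : ℝ} (hL : 0 < L) (z : ℂ) :
    ‖z - roundDemand L z‖ ≤ 2 * L := by
  have hre : |(z - roundDemand L z).re| ≤ L := by
    unfold roundDemand
    split_ifs
    · simpa using Int.abs_sub_ceil_div_mul_le z.re hL
    · simpa using Int.abs_sub_floor_div_mul_le z.re hL
  have him : |(z - roundDemand L z).im| ≤ L := by
    unfold roundDemand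
    split_ifs <;> simpa using Int.abs_sub_ceil_div_mul_le z.im hL
  linarith [Complex.norm_le_abs_re_add_abs_im (z - roundDemand L z)]

theorem norm_sum_le_norm_sum_roundDemand_add {ι : Type*} {L : ℝ} (hL : 0 < L)
    (S : Finset ι) (d : ι → ℂ) :
    ‖∑ k ∈ S, d k‖ ≤ ‖∑ k ∈ S, roundDemand L (d k)‖ + S.card * (2 * L) := by
  have herr : ‖∑ k ∈ S, (d k - roundDemand L (d k))‖ ≤ S.card * (2 * L) := by
    simpa using norm_sum_le_of_le S fun k _ => norm_sub_roundDemand_le hL (d k)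
  rw [Finset.sum_sub_distrib] at herr
  linarith [norm_le_insert' (∑ k ∈ S, d k) (∑ k ∈ S, roundDemand L (d k))]

theorem stmt_6_general {ι : Type*} (n : ℕ) (hn : 1 ≤ n) (P C ε L : ℝ)
    (hP : 1 ≤ P) (hC : 0 < C) (hε : 0 < ε)
    (hL : L = ε * C / (n * (P + 1)))
    (S : Finset ι) (hS : S.card ≤ n) (d : ι → ℂ)
    (hRound : ‖∑ k ∈ S, roundDemand L (d k)‖ ≤ (1 + 2 * ε) * C) :
    ‖∑ k ∈ S, d k‖ ≤ (1 + 3 * ε) * C := by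
  have hn0 : (0 : ℝ) < n := by exact_mod_cast hn
  have hLpos : 0 < L := by rw [hL]; positivity
  have hcard : (S.card : ℝ) * (2 * L) ≤ ε * C :=
    calc (S.card : ℝ) * (2 * L)
        ≤ n * (2 * L) := by gcongr
      _ = 2 / (P + 1) * (ε * C) := by rw [hL]; field_simp
      _ ≤ 1 * (ε * C) := by gcongr; rw [div_le_one (by linarith)]; linarith
      _ = ε * C := one_mul _
  calc ‖∑ k ∈ S, d k‖
      ≤ ‖∑ k ∈ S, roundDemand L (d k)‖ + S.card * (2 * L) :=
        norm_sum_le_norm_sum_roundDemand_add hLpos S d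
    _ ≤ (1 + 2 * ε) * C + ε * C := add_le_add hRound hcard
    _ = (1 + 3 * ε) * C := by ring

/-- if the rounded demands satisfy the inflated capacity
`(1 + 2ε)C` and the rounded negative real projection is at most `(P+1)C`,
then the original demands violate the capacity by a factor at most `1 + 3ε`. -/
theorem stmt_6 {ι : Type*} (n : ℕ) (hn : 1 ≤ n) (P C ε L : ℝ)
    (hP : 1 ≤ P) (hC : 0 < C) (hε : 0 < ε)
    (hL : L = ε * C / (n * (P + 1)))
    (S : Finset ι) (hS : S.card ≤ n) (d : ι → ℂ)
    (hIm : ∀ k ∈ S, 0 ≤ (d k).im)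
    (hRound : ‖∑ k ∈ S, roundDemand L (d k)‖ ≤ (1 + 2 * ε) * C)
    (hNeg : ∑ k ∈ S.filter (fun k => (d k).re < 0), -(roundDemand L (d k)).re
              ≤ (P + 1) * C) :
    ‖∑ k ∈ S, d k‖ ≤ (1 + 3 * ε) * C :=
  stmt_6_general n hn P C ε L hP hC hε hL S hS d hRound
end
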